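/- arXiv:2211.04635 — 2 statements merged into one kernel-verified Lean document; each statement's English description precedes it below -/
import Mathlib

section
/- Composition of two 1D convolutions is a single 1D convolution whose stride is the product of the strides: let X ∈ ℝ^{C×T}, W¹ ∈ ℝ^{D₁×C×K₁} with stride s₁ ≥ 1, and W² ∈ ℝ^{D₂×D₁×K₂} with stride s₂ ≥ 1, and suppose T is large enough that both convolutions are defined. Define the combined kernel W' ∈ ℝ^{D₂×C×K'} with K' = K₁ + s₁·(K₂−1) by W'_{e,c,κ} = Σ_{k₂=0}^{K₂−1} Σ_{d=0}^{D₁−1} W²_{e,d,k₂} · W¹_{d,c,κ−s₁k₂}, where terms with κ − s₁k₂ ∉ [0, K₁) are taken to be 0. Then for every 0 ≤ e < D₂ and every output index i for which both sides are defined, conv(conv(X, W¹, s₁), W², s₂)_{e,i} = conv(X, W', s₁·s₂)_{e,i}. In particular, if s₂ = 1 the composed network is a single convolution with stride s₁ and kernel size K₁ + s₁(K₂−1). -/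
lemma key_sum {K₁ K₂ K' s₁ : ℕ} (hK' : K' = K₁ + s₁ * (K₂ - 1))
    (w : Fin K₁ → ℝ) (x : ℕ → ℝ) (k₂ : Fin K₂) :
    ∑ κ : Fin K',
      (if h : s₁ * k₂.val ≤ κ.val ∧ κ.val - s₁ * k₂.val < K₁ then
          w ⟨κ.val - s₁ * k₂.val, h.2⟩ else 0) * x κ.val
      = ∑ k₁ : Fin K₁, w k₁ * x (s₁ * k₂.val + k₁.val) := by
  set g : ℕ → ℝ := fun n => if h : n < K₁ then w ⟨n, h⟩ else 0 with hg
  set m := s₁ * k₂.val with hm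
  have hk₂ : k₂.val ≤ K₂ - 1 := by have := k₂.isLt; omega
  have hmle : m ≤ s₁ * (K₂ - 1) := Nat.mul_le_mul_left _ hk₂
  have hmK' : m ≤ K' := by omega
  have hK₁le : K₁ ≤ K' - m := by omega
  have step1 : ∀ κ : Fin K',
      (if h : m ≤ κ.val ∧ κ.val - m < K₁ then w ⟨κ.val - m, h.2⟩ else 0) * x κ.val
        = (if m ≤ κ.val then g (κ.val - m) else 0) * x κ.val := by
    intro κ
    rcases le_or_gt m κ.val with h | h
    · rw [if_pos h, hg]
      rcases lt_or_ge (κ.val - m) K₁ with h2 | h2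
      · rw [dif_pos ⟨h, h2⟩]
        simp only [dif_pos h2]
      · rw [dif_neg (by omega)]
        simp only [dif_neg (not_lt.2 h2)]
    · rw [dif_neg (by omega), if_neg (by omega)]
  rw [Finset.sum_congr rfl (fun κ _ => step1 κ)]
  rw [Fin.sum_univ_eq_sum_range (fun n => (if m ≤ n then g (n - m) else 0) * x n)]
  rw [Finset.range_eq_Ico, ← Finset.sum_Ico_consecutive _ (Nat.zero_le m) hmK']
  have h0 : ∑ n ∈ Finset.Ico 0 m, (if m ≤ n then g (n - m) else 0) * x n = 0 := by
    apply Finset.sum_eq_zero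
    intro n hn
    rw [Finset.mem_Ico] at hn
    rw [if_neg (by omega), zero_mul]
  rw [h0, zero_add]
  have h1 : ∑ n ∈ Finset.Ico m K', (if m ≤ n then g (n - m) else 0) * x n
      = ∑ n ∈ Finset.Ico m K', g (n - m) * x n := by
    apply Finset.sum_congr rfl
    intro n hn
    rw [Finset.mem_Ico] at hn
    rw [if_pos hn.1]
  rw [h1, Finset.sum_Ico_eq_sum_range]
  simp only [Nat.add_sub_cancel_left]
  rw [← Finset.sum_subset (Finset.range_subset_range.2 hK₁le)
    (fun j _ hj => by
      rw [Finset.mem_range] at hj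
      rw [hg]; simp only; rw [dif_neg (by omega), zero_mul])]
  rw [← Fin.sum_univ_eq_sum_range (fun j => g j * x (m + j))]
  apply Finset.sum_congr rfl
  intro k₁ _
  rw [hg]
  simp only [k₁.isLt, dif_pos, Fin.eta]

lemma swap13 {A B Cc : Type*} [Fintype A] [Fintype B] [Fintype Cc]
    (f : A → B → Cc → ℝ) :
    (∑ a : A, ∑ b : B, ∑ c : Cc, f a b c) = ∑ c : Cc, ∑ b : B, ∑ a : A, f a b c := by
  calc (∑ a : A, ∑ b : B, ∑ c : Cc, f a b c)
      = ∑ b : B, ∑ a : A, ∑ c : Cc, f a b c := Finset.sum_comm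
    _ = ∑ b : B, ∑ c : Cc, ∑ a : A, f a b c :=
        Finset.sum_congr rfl fun b _ => Finset.sum_comm
    _ = ∑ c : Cc, ∑ b : B, ∑ a : A, f a b c := Finset.sum_comm

lemma rot3 {A B Cc : Type*} [Fintype A] [Fintype B] [Fintype Cc]
    (f : A → B → Cc → ℝ) :
    (∑ a : A, ∑ b : B, ∑ c : Cc, f a b c) = ∑ c : Cc, ∑ a : A, ∑ b : B, f a b c := by
  calc (∑ a : A, ∑ b : B, ∑ c : Cc, f a b c)
      = ∑ a : A, ∑ c : Cc, ∑ b : B, f a b c :=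
        Finset.sum_congr rfl fun a _ => Finset.sum_comm
    _ = ∑ c : Cc, ∑ a : A, ∑ b : B, f a b c := Finset.sum_comm



/-- 1D convolution: `X ∈ ℝ^{C×T}` input, `W ∈ ℝ^{D×C×K}` kernel (`K ≤ T`), stride `s`.
Output `Y ∈ ℝ^{D×(⌊(T−K)/s⌋+1)}` with
`Y d i = ∑_{c<C} ∑_{k<K} W d c k * X c (s*i + k)` (0-based, no bias). -/
def conv1d {C T D K : ℕ} (hK : K ≤ T) (X : Fin C → Fin T → ℝ)
    (W : Fin D → Fin C → Fin K → ℝ) (s : ℕ) :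
    Fin D → Fin ((T - K) / s + 1) → ℝ :=
  fun d i => ∑ c : Fin C, ∑ k : Fin K,
    W d c k * X c ⟨s * i.val + k.val, by
      have h1 : i.val ≤ (T - K) / s := Nat.lt_succ_iff.mp i.isLt
      have h2 : s * i.val ≤ s * ((T - K) / s) := Nat.mul_le_mul_left _ h1
      have h3 : s * ((T - K) / s) ≤ T - K := Nat.mul_div_le _ _
      have h4 := k.isLt
      omega⟩

/-- **Composition of two 1D convolutions is a single 1D convolution whose stride is the
product of the strides.**  Let `X ∈ ℝ^{C×T}`, `W¹ ∈ ℝ^{D₁×C×K₁}` with stride `s₁ ≥ 1`,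
`W² ∈ ℝ^{D₂×D₁×K₂}` with stride `s₂ ≥ 1`, with `T` large enough that both convolutions
are defined.  Define `W' ∈ ℝ^{D₂×C×K'}`, `K' = K₁ + s₁·(K₂−1)`, by
`W'_{e,c,κ} = ∑_{k₂<K₂} ∑_{d<D₁} W²_{e,d,k₂} · W¹_{d,c,κ−s₁k₂}` (terms with
`κ − s₁k₂ ∉ [0, K₁)` taken to be `0`).  Then for every `e < D₂` and every output index
`i` for which both sides are defined,
`conv(conv(X, W¹, s₁), W², s₂)_{e,i} = conv(X, W', s₁·s₂)_{e,i}`.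
(In particular, for `s₂ = 1` the composed network is a single convolution with stride
`s₁` and kernel size `K₁ + s₁(K₂−1)`.) -/
theorem conv_comp_eq_single_conv {C T D₁ D₂ K₁ K₂ : ℕ} (s₁ s₂ : ℕ)
    (hs₁ : 1 ≤ s₁) (hs₂ : 1 ≤ s₂)
    (hK₁ : K₁ ≤ T) (hK₂ : K₂ ≤ (T - K₁) / s₁ + 1)
    (hK' : K₁ + s₁ * (K₂ - 1) ≤ T)
    (X : Fin C → Fin T → ℝ) (W₁ : Fin D₁ → Fin C → Fin K₁ → ℝ)
    (W₂ : Fin D₂ → Fin D₁ → Fin K₂ → ℝ) :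
    ∀ (e : Fin D₂) (i : ℕ)
      (hi₁ : i < ((T - K₁) / s₁ + 1 - K₂) / s₂ + 1)
      (hi₂ : i < (T - (K₁ + s₁ * (K₂ - 1))) / (s₁ * s₂) + 1),
      conv1d hK₂ (conv1d hK₁ X W₁ s₁) W₂ s₂ e ⟨i, hi₁⟩
        = conv1d hK' X
            (fun e' c κ => ∑ k₂ : Fin K₂, ∑ d : Fin D₁,
              W₂ e' d k₂ *
                (if h : s₁ * k₂.val ≤ κ.val ∧ κ.val - s₁ * k₂.val < K₁ then
                    W₁ d c ⟨κ.val - s₁ * k₂.val, h.2⟩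
                  else 0))
            (s₁ * s₂) e ⟨i, hi₂⟩ := by
  intro e i hi₁ hi₂
  obtain ⟨Y, hXY⟩ : ∃ Y : Fin C → ℕ → ℝ, ∀ (c : Fin C) (n : ℕ) (h : n < T),
      X c ⟨n, h⟩ = Y c n :=
    ⟨fun c n => if h : n < T then X c ⟨n, h⟩ else 0,
      fun c n h => by simp only []; rw [dif_pos h]⟩
  simp only [conv1d, hXY, Finset.mul_sum]
  rw [swap13]
  simp only [Finset.sum_mul]
  refine Finset.sum_congr rfl fun c _ => ?_
  have inner : ∀ (k₂ : Fin K₂) (d : Fin D₁),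
      ∑ k₁ : Fin K₁, W₂ e d k₂ * (W₁ d c k₁ * Y c (s₁ * (s₂ * i + k₂.val) + k₁.val))
        = ∑ κ : Fin (K₁ + s₁ * (K₂ - 1)),
            (W₂ e d k₂ *
              if h : s₁ * k₂.val ≤ κ.val ∧ κ.val - s₁ * k₂.val < K₁ then
                W₁ d c ⟨κ.val - s₁ * k₂.val, h.2⟩ else 0) * Y c (s₁ * s₂ * i + κ.val) := by
    intro k₂ d
    calc ∑ k₁ : Fin K₁, W₂ e d k₂ * (W₁ d c k₁ * Y c (s₁ * (s₂ * i + k₂.val) + k₁.val))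
          = ∑ k₁ : Fin K₁, (fun k₁' : Fin K₁ => W₂ e d k₂ * W₁ d c k₁') k₁ *
              (fun n => Y c (s₁ * s₂ * i + n)) (s₁ * k₂.val + k₁.val) := by
            refine Finset.sum_congr rfl fun k₁ _ => ?_
            have harg : s₁ * (s₂ * i + k₂.val) + k₁.val = s₁ * s₂ * i + (s₁ * k₂.val + k₁.val) := by
              ring
            simp only [harg, mul_assoc]
        _ = ∑ κ : Fin (K₁ + s₁ * (K₂ - 1)),
              (if h : s₁ * k₂.val ≤ κ.val ∧ κ.val - s₁ * k₂.val < K₁ then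
                  (fun k₁' : Fin K₁ => W₂ e d k₂ * W₁ d c k₁') ⟨κ.val - s₁ * k₂.val, h.2⟩
                else 0) * (fun n => Y c (s₁ * s₂ * i + n)) κ.val :=
            (key_sum (K₁ := K₁) (K₂ := K₂) (K' := K₁ + s₁ * (K₂ - 1)) (s₁ := s₁) rfl
              (fun k₁' : Fin K₁ => W₂ e d k₂ * W₁ d c k₁')
              (fun n => Y c (s₁ * s₂ * i + n)) k₂).symm
        _ = ∑ κ : Fin (K₁ + s₁ * (K₂ - 1)),
              (W₂ e d k₂ *
                if h : s₁ * k₂.val ≤ κ.val ∧ κ.val - s₁ * k₂.val < K₁ then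
                  W₁ d c ⟨κ.val - s₁ * k₂.val, h.2⟩ else 0) * Y c (s₁ * s₂ * i + κ.val) := by
            refine Finset.sum_congr rfl fun κ _ => ?_
            congr 1
            split_ifs with h
            · rfl
            · rw [mul_zero]

  calc ∑ k₂ : Fin K₂, ∑ d : Fin D₁,
        ∑ k₁ : Fin K₁, W₂ e d k₂ * (W₁ d c k₁ * Y c (s₁ * (s₂ * i + k₂.val) + k₁.val))
      = ∑ k₂ : Fin K₂, ∑ d : Fin D₁,
          ∑ κ : Fin (K₁ + s₁ * (K₂ - 1)),
            (W₂ e d k₂ *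
              if h : s₁ * k₂.val ≤ κ.val ∧ κ.val - s₁ * k₂.val < K₁ then
                W₁ d c ⟨κ.val - s₁ * k₂.val, h.2⟩ else 0) * Y c (s₁ * s₂ * i + κ.val) :=
        Finset.sum_congr rfl fun k₂ _ => Finset.sum_congr rfl fun d _ => inner k₂ d
    _ = ∑ κ : Fin (K₁ + s₁ * (K₂ - 1)), ∑ k₂ : Fin K₂, ∑ d : Fin D₁,
          (W₂ e d k₂ *
            if h : s₁ * k₂.val ≤ κ.val ∧ κ.val - s₁ * k₂.val < K₁ then
              W₁ d c ⟨κ.val - s₁ * k₂.val, h.2⟩ else 0) * Y c (s₁ * s₂ * i + κ.val) :=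
        rot3 _
end

section
/- Multi-layer version of the streaming-to-linear conversion (Proposition 1, linear case): let L ≥ 1 and let W¹, …, Wᴸ be 1D convolution kernels with Wˡ ∈ ℝ^{Dₗ×Dₗ₋₁×Kₗ} (where D₀ = C), where the first layer has stride s₁ = s ≥ 1 and all subsequent layers have stride sₗ = 1 (l ≥ 2). Then there exists a single kernel W' ∈ ℝ^{D_L×C×K'} with K' = K₁ + s·Σ_{l=2}^{L}(Kₗ − 1) such that for every input X ∈ ℝ^{C×T} with T large enough and every entry (e, i) for which both sides are defined, the L-fold composition conv(… conv(conv(X, W¹, s), W², 1) …, Wᴸ, 1)_{e,i} = conv(X, W', s)_{e,i}. Consequently, running this network in streaming mode with chunk size t = s, each inference step is computed by a single fixed linear map ℝ^{C·K'} → ℝ^{D_L} (given by the reshape of W') applied to the flattened buffer of the most recent K' input frames. -/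
/-- 1D convolution on ℕ-indexed data: `C` input channels, kernel size `K`, stride `s`,
kernel `W` (indexed `W d c k`), input `X` (indexed `X c t`).  Entry `(d, i)` of the
output is `∑_{c<C} ∑_{k<K} W d c k * X c (s*i + k)` (0-based, no bias); only the
entries with valid indices are meaningful. -/
def convN (C K s : ℕ) (W : ℕ → ℕ → ℕ → ℝ) (X : ℕ → ℕ → ℝ) : ℕ → ℕ → ℝ :=
  fun d i => ∑ c ∈ Finset.range C, ∑ k ∈ Finset.range K, W d c k * X c (s * i + k)

/-- An `L`-layer 1D CNN: layer `l` (0-based) has `D l` input channels, `D (l+1)` output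
channels, kernel size `K l` and kernel `W l`; the first layer (`l = 0`) has stride `s`
and all subsequent layers have stride `1`.  `net D K s W L X` is the output after the
first `L` layers applied to the input `X` (which has `D 0 = C` channels). -/
def net (D K : ℕ → ℕ) (s : ℕ) (W : ℕ → ℕ → ℕ → ℕ → ℝ) :
    ℕ → (ℕ → ℕ → ℝ) → (ℕ → ℕ → ℝ)
  | 0, X => X
  | (L + 1), X => convN (D L) (K L) (if L = 0 then s else 1) (W L) (net D K s W L X)

/-- Auxiliary: div/mod of `c * M + κ`. -/
lemma aux_divmod_mul_add (M c κ : ℕ) (hM : 0 < M) (hκ : κ < M) :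
    (c * M + κ) / M = c ∧ (c * M + κ) % M = κ := by
  rw [mul_comm, Nat.mul_add_div hM, Nat.mul_add_mod, Nat.div_eq_of_lt hκ,
    Nat.mod_eq_of_lt hκ]
  simp

/-- Auxiliary: flattening a double sum via div/mod. -/
lemma aux_flatten_sum (C M : ℕ) (F : ℕ → ℕ → ℝ) :
    ∑ c ∈ Finset.range C, ∑ κ ∈ Finset.range M, F c κ
      = ∑ p ∈ Finset.range (C * M), F (p / M) (p % M) := by
  rcases Nat.eq_zero_or_pos M with hM | hM
  · simp [hM]
  rw [← Finset.sum_product']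
  refine Finset.sum_nbij' (fun q => q.1 * M + q.2) (fun p => (p / M, p % M)) ?_ ?_ ?_ ?_ ?_
  · rintro ⟨c, κ⟩ hq
    simp only [Finset.mem_product, Finset.mem_range] at hq ⊢
    calc c * M + κ < c * M + M := by omega
      _ ≤ C * M := by nlinarith [hq.1, hq.2]
  · intro p hp
    simp only [Finset.mem_range] at hp
    simp only [Finset.mem_product, Finset.mem_range]
    exact ⟨Nat.div_lt_of_lt_mul (by rw [mul_comm]; exact hp), Nat.mod_lt _ hM⟩
  · rintro ⟨c, κ⟩ hq
    simp only [Finset.mem_product, Finset.mem_range] at hq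
    obtain ⟨h1, h2⟩ := aux_divmod_mul_add M c κ hM hq.2
    simp [h1, h2]
  · intro p hp
    simp only []
    rw [mul_comm]
    exact Nat.div_add_mod p M
  · rintro ⟨c, κ⟩ hq
    simp only [Finset.mem_product, Finset.mem_range] at hq
    obtain ⟨h1, h2⟩ := aux_divmod_mul_add M c κ hM hq.2
    simp [h1, h2]

/-- Auxiliary: the composed kernel of a stride-`s` conv (kernel `V`, size `K'`)
followed by a stride-`1` conv (kernel `W`, size `K2`, `D2` input channels). -/
noncomputable def auxCompKer (D2 K2 K' s : ℕ) (W V : ℕ → ℕ → ℕ → ℝ) : ℕ → ℕ → ℕ → ℝ :=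
  fun e c' p => ∑ c ∈ Finset.range D2, ∑ k ∈ Finset.range K2,
    if s * k ≤ p ∧ p < s * k + K' then W e c k * V c c' (p - s * k) else 0

lemma aux_sum_ite_window (N a K' : ℕ) (h : a + K' ≤ N) (g : ℕ → ℝ) :
    ∑ p ∈ Finset.range N, (if a ≤ p ∧ p < a + K' then g p else 0)
      = ∑ κ ∈ Finset.range K', g (a + κ) := by
  have hmem : ∀ p, (a ≤ p ∧ p < a + K') ↔ p ∈ Finset.Ico a (a + K') := by
    simp [Finset.mem_Ico]
  simp only [hmem]
  rw [Finset.sum_ite_mem, Finset.inter_eq_right.2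
    (by intro p hp; simp only [Finset.mem_Ico] at hp; simp only [Finset.mem_range]; omega),
    Finset.sum_Ico_eq_sum_range]
  simp

lemma aux_comp_conv (C K' D2 K2 s : ℕ) (V W : ℕ → ℕ → ℕ → ℝ)
    (Y X : ℕ → ℕ → ℝ) (hY : ∀ d j, Y d j = convN C K' s V X d j) (e i : ℕ) :
    convN D2 K2 1 W Y e i
      = convN C (K' + s * (K2 - 1)) s (auxCompKer D2 K2 K' s W V) X e i := by
  unfold convN auxCompKer
  simp only [hY]
  unfold convN
  simp only [one_mul, Finset.mul_sum, Finset.sum_mul, ite_mul, zero_mul]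
  conv_rhs => enter [2, c']; rw [Finset.sum_comm]; enter [2, c]; rw [Finset.sum_comm]
  conv_rhs => rw [Finset.sum_comm]
  conv_rhs => enter [2, c]; rw [Finset.sum_comm]
  refine Finset.sum_congr rfl fun c _ => Finset.sum_congr rfl fun k hk => ?_
  refine Finset.sum_congr rfl fun c' _ => ?_
  simp only [Finset.mem_range] at hk
  have hk' : s * k + K' ≤ K' + s * (K2 - 1) := by
    have : k ≤ K2 - 1 := by omega
    have := Nat.mul_le_mul_left s this
    omega
  rw [aux_sum_ite_window _ (s * k) K' hk']
  refine Finset.sum_congr rfl fun κ _ => ?_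
  have h1 : s * k + κ - s * k = κ := by omega
  have h2 : s * i + (s * k + κ) = s * (i + k) + κ := by ring
  rw [h1, h2, mul_assoc]

/-- Auxiliary: the inductive conversion of the multi-layer net to one convolution. -/
lemma aux_net_linear (D K : ℕ → ℕ) (s : ℕ) (W : ℕ → ℕ → ℕ → ℕ → ℝ) :
    ∀ L, 1 ≤ L → ∃ W' : ℕ → ℕ → ℕ → ℝ,
      ∀ (X : ℕ → ℕ → ℝ) (e i : ℕ),
        net D K s W L X e i
          = convN (D 0) (K 0 + s * ∑ l ∈ Finset.Ico 1 L, (K l - 1)) s W' X e i := by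
  intro L hL1
  induction L, hL1 using Nat.le_induction with
  | base =>
    refine ⟨W 0, fun X e i => ?_⟩
    simp [net, convN]
  | succ L hL ih =>
    obtain ⟨V, hV⟩ := ih
    refine ⟨auxCompKer (D L) (K L)
      (K 0 + s * ∑ l ∈ Finset.Ico 1 L, (K l - 1)) s (W L) V, fun X e i => ?_⟩
    have hne : L ≠ 0 := by omega
    have hstep : net D K s W (L + 1) X
        = convN (D L) (K L) 1 (W L) (net D K s W L X) := by
      simp [net, hne]
    rw [hstep]
    have := aux_comp_conv (D 0) (K 0 + s * ∑ l ∈ Finset.Ico 1 L, (K l - 1))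
      (D L) (K L) s V (W L) (net D K s W L X) X (fun d j => hV X d j) e i
    rw [this]
    have hsum : ∑ l ∈ Finset.Ico 1 (L + 1), (K l - 1)
        = (∑ l ∈ Finset.Ico 1 L, (K l - 1)) + (K L - 1) :=
      Finset.sum_Ico_succ_top hL _
    have hK : K 0 + s * ∑ l ∈ Finset.Ico 1 L, (K l - 1) + s * (K L - 1)
        = K 0 + s * ∑ l ∈ Finset.Ico 1 (L + 1), (K l - 1) := by
      rw [hsum]; ring
    rw [hK]

/-- **Multi-layer streaming-to-linear conversion (Proposition 1, linear case).**
Let `L ≥ 1` and let `W⁰, …, W^{L−1}` be 1D convolution kernels, `Wˡ ∈ ℝ^{Dₗ₊₁×Dₗ×Kₗ}`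
(`D 0 = C` input channels), where the first layer has stride `s ≥ 1` and all subsequent
layers have stride `1`.  Then there is a single kernel `W' ∈ ℝ^{D_L×C×K'}` with
`K' = K₀ + s·∑_{l=1}^{L−1}(Kₗ − 1)` such that for every input `X` and every entry
`(e, i)`, the `L`-fold composition equals `conv(X, W', s)` at `(e, i)`; consequently,
running the network in streaming mode with chunk size `t = s`, each inference step is
computed by a single fixed linear map `ℝ^{C·K'} → ℝ^{D_L}` (the reshape of `W'`, with
flattened index `p = c·K' + κ ↔ (c, κ) = (p / K', p % K')`) applied to the flattened
buffer of the most recent `K'` input frames. -/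
theorem streaming_cnn_linearizable (D K : ℕ → ℕ) (s L : ℕ) (hs : 1 ≤ s) (hL : 1 ≤ L)
    (W : ℕ → ℕ → ℕ → ℕ → ℝ) :
    ∃ W' : ℕ → ℕ → ℕ → ℝ,
      ∀ (X : ℕ → ℕ → ℝ) (e i : ℕ),
        net D K s W L X e i
          = convN (D 0) (K 0 + s * ∑ l ∈ Finset.Ico 1 L, (K l - 1)) s W' X e i
        ∧
        net D K s W L X e i
          = ∑ p ∈ Finset.range (D 0 * (K 0 + s * ∑ l ∈ Finset.Ico 1 L, (K l - 1))),
              W' e (p / (K 0 + s * ∑ l ∈ Finset.Ico 1 L, (K l - 1)))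
                   (p % (K 0 + s * ∑ l ∈ Finset.Ico 1 L, (K l - 1)))
                * X (p / (K 0 + s * ∑ l ∈ Finset.Ico 1 L, (K l - 1)))
                    (s * i + p % (K 0 + s * ∑ l ∈ Finset.Ico 1 L, (K l - 1))) := by
  obtain ⟨W', hW'⟩ := aux_net_linear D K s W L hL
  refine ⟨W', fun X e i => ⟨hW' X e i, ?_⟩⟩
  rw [hW' X e i]
  unfold convN
  exact aux_flatten_sum (D 0) (K 0 + s * ∑ l ∈ Finset.Ico 1 L, (K l - 1))
    (fun c κ => W' e c κ * X c (s * i + κ))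
end
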